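/- Let X be an infinite-dimensional complex Hilbert space, let T be a compact operator on X with decreasingly ordered singular values (s_k(T)), and let (e_k) be any orthonormal system in X. Then for every n ∈ ℕ, Σ_{k=1}^n |⟨e_k, T e_k⟩| ≤ Σ_{k=1}^n s_k(T). -/

import Mathlib

/-!
Compress `T` to the operator `A = P T` on the span `V` of `e 0, …, e (n - 1)`, where `P` is the
orthogonal projection onto `V`: the diagonal entries `⟪e k, T (e k)⟫` do not change, and
approximation numbers do not grow under composition with contractions. On the finite-dimensional
space `V`, a diagonal operator `D` of phases turns `∑ ‖⟪e k, A (e k)⟫‖` into the trace of `D A`;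
evaluated in a basis `w` of right singular vectors of `A`, this trace is at most
`∑ ‖A (w i)‖ = ∑ σᵢ(A)`. Finally `σⱼ(A)` is at most the `j`-th approximation number, because every
operator of rank `≤ j` kills a nonzero vector of the span of `w 0, …, w j`, on which
`‖A x‖ ≥ σⱼ ‖x‖`.
-/

open scoped ComplexInnerProductSpace ENNReal
open Filter

noncomputable section

universe u v

noncomputable def sv {X : Type u} {Y : Type v} [NormedAddCommGroup X] [InnerProductSpace ℂ X]
    [NormedAddCommGroup Y] [InnerProductSpace ℂ Y] (C : X →L[ℂ] Y) (n : ℕ) : ℝ :=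
  ⨅ F : {F : X →L[ℂ] Y // Module.rank ℂ (LinearMap.range (F : X →ₗ[ℂ] Y)) ≤ n},
    ‖C - (F : X →L[ℂ] Y)‖

def MemSchatten {X : Type u} {Y : Type v} [NormedAddCommGroup X] [InnerProductSpace ℂ X]
    [NormedAddCommGroup Y] [InnerProductSpace ℂ Y] (p : ℝ≥0∞) (C : X →L[ℂ] Y) : Prop :=
  IsCompactOperator C ∧ (p ≠ ∞ → Summable (fun n => sv C n ^ p.toReal))

noncomputable def schattenNorm {X : Type u} {Y : Type v} [NormedAddCommGroup X]
    [InnerProductSpace ℂ X] [NormedAddCommGroup Y] [InnerProductSpace ℂ Y]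
    (p : ℝ≥0∞) (C : X →L[ℂ] Y) : ℝ :=
  if p = ∞ then ‖C‖ else (∑' n, sv C n ^ p.toReal) ^ (1 / p.toReal)

def IsTraceOf {Y : Type v} [NormedAddCommGroup Y] [InnerProductSpace ℂ Y] [CompleteSpace Y]
    (A : Y →L[ℂ] Y) (z : ℂ) : Prop :=
  ∀ (ι : Type v) (b : HilbertBasis ι ℂ Y), HasSum (fun i => ⟪b i, A (b i)⟫) z

open Module
open scoped InnerProductSpace

namespace LinearMap

theorem exists_ne_zero_mem_span_apply_eq_zero {K V W ι : Type*} [Field K] [AddCommGroup V]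
    [Module K V] [FiniteDimensional K V] [AddCommGroup W] [Module K W] [Fintype ι] {v : ι → V}
    (hv : LinearIndependent K v) (G : V →ₗ[K] W) (hG : finrank K (range G) < Fintype.card ι) :
    ∃ x ∈ Submodule.span K (Set.range v), x ≠ 0 ∧ G x = 0 := by
  set S := Submodule.span K (Set.range v)
  have hS : finrank K (range G) < finrank K S := by rwa [finrank_span_eq_card hv]
  obtain ⟨x, hx, hx0⟩ := (Submodule.ne_bot_iff _).mp
    (ker_ne_bot_of_finrank_lt (f := G.rangeRestrict ∘ₗ S.subtype) hS)
  refine ⟨x, x.2, fun h => hx0 (Subtype.ext h), ?_⟩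
  simpa using congrArg Subtype.val (mem_ker.mp hx)

variable {𝕜 E F : Type*} [RCLike 𝕜]
  [NormedAddCommGroup E] [InnerProductSpace 𝕜 E] [FiniteDimensional 𝕜 E]
  [NormedAddCommGroup F] [InnerProductSpace 𝕜 F] [FiniteDimensional 𝕜 F]

def rightSingularBasis (T : E →ₗ[𝕜] F) : OrthonormalBasis (Fin (finrank 𝕜 E)) 𝕜 E :=
  T.isSymmetric_adjoint_comp_self.eigenvectorBasis rfl

theorem norm_sq_apply_eq_sum (T : E →ₗ[𝕜] F) (x : E) :
    ‖T x‖ ^ 2 =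
      ∑ i : Fin (finrank 𝕜 E), T.singularValues i ^ 2 * ‖⟪T.rightSingularBasis i, x⟫_𝕜‖ ^ 2 := by
  set w := T.rightSingularBasis
  have hcoord : ∀ i,
      ⟪w i, (adjoint T ∘ₗ T) x⟫_𝕜 = ((T.singularValues i ^ 2 : ℝ) : 𝕜) * ⟪w i, x⟫_𝕜 := by
    intro i
    rw [sq_singularValues_fin T rfl]
    simp only [w, rightSingularBasis, ← OrthonormalBasis.repr_apply_apply,
      IsSymmetric.eigenvectorBasis_apply_self_apply]
  have h : ((‖T x‖ ^ 2 : ℝ) : 𝕜) =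
      ∑ i : Fin (finrank 𝕜 E), ((T.singularValues i ^ 2 * ‖⟪w i, x⟫_𝕜‖ ^ 2 : ℝ) : 𝕜) := by
    rw [RCLike.ofReal_pow, ← inner_self_eq_norm_sq_to_K, ← adjoint_inner_right,
      ← w.sum_inner_mul_inner]
    refine Finset.sum_congr rfl fun i _ => ?_
    rw [← comp_apply, hcoord, ← inner_conj_symm x, mul_left_comm, RCLike.conj_mul]
    push_cast; ring
  exact_mod_cast h

theorem norm_apply_rightSingularBasis (T : E →ₗ[𝕜] F) (i : Fin (finrank 𝕜 E)) :
    ‖T (T.rightSingularBasis i)‖ = T.singularValues i := by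
  rw [← sq_eq_sq₀ (norm_nonneg _) (singularValues_nonneg _ _), norm_sq_apply_eq_sum]
  simp [OrthonormalBasis.inner_eq_ite, apply_ite]

theorem singularValues_mul_norm_le_norm_apply (T : E →ₗ[𝕜] F) {j : ℕ} {x : E}
    (hx : ∀ i : Fin (finrank 𝕜 E), j < i → ⟪T.rightSingularBasis i, x⟫_𝕜 = 0) :
    T.singularValues j * ‖x‖ ≤ ‖T x‖ := by
  have hsq : (T.singularValues j * ‖x‖) ^ 2 ≤ ‖T x‖ ^ 2 := by
    rw [mul_pow, ← T.rightSingularBasis.sum_sq_norm_inner_right, Finset.mul_sum,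
      norm_sq_apply_eq_sum]
    refine Finset.sum_le_sum fun i _ => ?_
    rcases le_or_gt (i : ℕ) j with hij | hij
    · gcongr
      · exact T.singularValues_nonneg j
      · exact T.singularValues_antitone hij
    · simp [hx i hij]
  exact (pow_le_pow_iff_left₀ (mul_nonneg (T.singularValues_nonneg j) (norm_nonneg x))
    (norm_nonneg _) two_ne_zero).mp hsq

theorem norm_trace_comp_le_sum_singularValues (A C : E →ₗ[𝕜] E) (hC : ∀ x, ‖C x‖ ≤ ‖x‖) :
    ‖trace 𝕜 E (C ∘ₗ A)‖ ≤ ∑ i ∈ Finset.range (finrank 𝕜 E), A.singularValues i := by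
  set w := A.rightSingularBasis
  rw [trace_eq_sum_inner _ w, ← Fin.sum_univ_eq_sum_range]
  refine (norm_sum_le _ _).trans (Finset.sum_le_sum fun i _ => ?_)
  calc ‖⟪w i, (C ∘ₗ A) (w i)⟫_𝕜‖ ≤ ‖C (A (w i))‖ := by
        simpa using norm_inner_le_norm (𝕜 := 𝕜) (w i) (C (A (w i)))
    _ ≤ ‖A (w i)‖ := hC _
    _ = A.singularValues i := norm_apply_rightSingularBasis A i

theorem sum_norm_inner_le_sum_singularValues {ι : Type*} [Fintype ι] (A : E →ₗ[𝕜] E)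
    (b : OrthonormalBasis ι 𝕜 E) :
    ∑ k, ‖⟪b k, A (b k)⟫_𝕜‖ ≤ ∑ i ∈ Finset.range (finrank 𝕜 E), A.singularValues i := by
  -- `D` multiplies the `k`-th coordinate by a phase making the `k`-th diagonal entry nonnegative.
  choose z hz1 hz using fun k => RCLike.exists_norm_eq_mul_self ⟪b k, A (b k)⟫_𝕜
  let D : E →ₗ[𝕜] E := ∑ k, z k • (innerₛₗ 𝕜 (b k)).smulRight (b k)
  have hD : ∀ x k, ⟪b k, D x⟫_𝕜 = z k * ⟪b k, x⟫_𝕜 := by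
    intro x k
    simpa [D, smul_smul] using b.orthonormal.inner_right_fintype (fun l => z l * ⟪b l, x⟫_𝕜) k
  have hD_le : ∀ x, ‖D x‖ ≤ ‖x‖ := by
    intro x
    rw [← sq_le_sq₀ (norm_nonneg _) (norm_nonneg _), ← b.sum_sq_norm_inner_right (D x),
      ← b.sum_sq_norm_inner_right x]
    gcongr with k
    rw [hD, norm_mul, hz1, one_mul]
  calc ∑ k, ‖⟪b k, A (b k)⟫_𝕜‖ = ‖trace 𝕜 E (D ∘ₗ A)‖ := by
        rw [trace_eq_sum_inner _ b]
        simp_rw [comp_apply, hD, ← hz]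
        norm_cast
        exact (Real.norm_of_nonneg (Finset.sum_nonneg fun k _ => norm_nonneg _)).symm
    _ ≤ _ := norm_trace_comp_le_sum_singularValues A D hD_le

end LinearMap

namespace ContinuousLinearMap

variable {𝕜 E F : Type*} [RCLike 𝕜]
  [NormedAddCommGroup E] [InnerProductSpace 𝕜 E] [FiniteDimensional 𝕜 E]
  [NormedAddCommGroup F] [InnerProductSpace 𝕜 F] [FiniteDimensional 𝕜 F]

theorem singularValues_le_opNorm_sub (A G : E →L[𝕜] F) {j : ℕ}
    (hG : (G : E →ₗ[𝕜] F).rank ≤ j) : (A : E →ₗ[𝕜] F).singularValues j ≤ ‖A - G‖ := by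
  set T : E →ₗ[𝕜] F := (A : E →ₗ[𝕜] F)
  rcases le_or_gt (finrank 𝕜 E) j with hj | hj
  · rw [T.singularValues_of_finrank_le hj]
    exact norm_nonneg _
  set w := T.rightSingularBasis
  set v : Fin (j + 1) → E := w ∘ Fin.castLE hj
  have hv : Orthonormal 𝕜 v := w.orthonormal.comp _ (Fin.castLE_injective hj)
  obtain ⟨x, hxv, hx0, hGx⟩ := LinearMap.exists_ne_zero_mem_span_apply_eq_zero
    hv.linearIndependent (G : E →ₗ[𝕜] F)
    (by simpa using Nat.lt_succ_of_le (finrank_le_of_rank_le hG))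
  have hxw : ∀ i : Fin (finrank 𝕜 E), j < i → ⟪w i, x⟫_𝕜 = 0 := by
    intro i hi
    refine Submodule.mem_orthogonal_singleton_iff_inner_right.mp
      (Submodule.span_le.mpr ?_ hxv)
    rintro _ ⟨k, rfl⟩
    refine Submodule.mem_orthogonal_singleton_iff_inner_right.mpr
      (w.orthonormal.2 fun h => ?_)
    have := congrArg Fin.val h
    simp only [Fin.val_castLE] at this
    omega
  have hAx : ‖A x‖ ≤ ‖A - G‖ * ‖x‖ := by
    have hGx : G x = 0 := hGx
    simpa [hGx] using (A - G).le_opNorm x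
  exact le_of_mul_le_mul_right ((T.singularValues_mul_norm_le_norm_apply hxw).trans hAx)
    (norm_pos_iff.mpr hx0)

end ContinuousLinearMap

section ApproximationNumbers

variable {X : Type u} {Y : Type v} [NormedAddCommGroup X] [InnerProductSpace ℂ X]
  [NormedAddCommGroup Y] [InnerProductSpace ℂ Y]

theorem sv_nonneg (C : X →L[ℂ] Y) (n : ℕ) : 0 ≤ sv C n :=
  Real.iInf_nonneg fun _ => norm_nonneg _

theorem sv_le_opNorm_sub (C G : X →L[ℂ] Y) {n : ℕ} (hG : (G : X →ₗ[ℂ] Y).rank ≤ n) :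
    sv C n ≤ ‖C - G‖ :=
  ciInf_le ⟨0, by rintro _ ⟨F, rfl⟩; exact norm_nonneg _⟩
    (⟨G, hG⟩ : {F : X →L[ℂ] Y // (F : X →ₗ[ℂ] Y).rank ≤ n})

theorem sv_comp_le {W : Type*} {Z : Type v} [NormedAddCommGroup W] [InnerProductSpace ℂ W]
    [NormedAddCommGroup Z] [InnerProductSpace ℂ Z]
    (B : Y →L[ℂ] Z) (C : X →L[ℂ] Y) (D : W →L[ℂ] X) (n : ℕ) :
    sv (B ∘L C ∘L D) n ≤ ‖B‖ * ‖D‖ * sv C n := by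
  have : Nonempty {F : X →L[ℂ] Y // (F : X →ₗ[ℂ] Y).rank ≤ n} := ⟨⟨0, by simp⟩⟩
  conv_rhs => rw [sv, Real.mul_iInf_of_nonneg (by positivity)]
  refine le_ciInf fun ⟨G, hG⟩ => ?_
  have hrank : ((B ∘L G ∘L D : W →L[ℂ] Z) : W →ₗ[ℂ] Z).rank ≤ n :=
    ((LinearMap.rank_comp_le_right _ _).trans (LinearMap.rank_comp_le_left _ _)).trans hG
  calc sv (B ∘L C ∘L D) n ≤ ‖B ∘L C ∘L D - B ∘L G ∘L D‖ := sv_le_opNorm_sub _ _ hrank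
    _ = ‖B ∘L (C - G) ∘L D‖ := by simp only [ContinuousLinearMap.sub_comp,
        ContinuousLinearMap.comp_sub]
    _ ≤ ‖B‖ * (‖C - G‖ * ‖D‖) := (ContinuousLinearMap.opNorm_comp_le _ _).trans
        (mul_le_mul_of_nonneg_left (ContinuousLinearMap.opNorm_comp_le _ _) (norm_nonneg _))
    _ = ‖B‖ * ‖D‖ * ‖C - G‖ := by ring

theorem ContinuousLinearMap.singularValues_le_sv {E F : Type*} [NormedAddCommGroup E]
    [InnerProductSpace ℂ E] [FiniteDimensional ℂ E] [NormedAddCommGroup F]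
    [InnerProductSpace ℂ F] [FiniteDimensional ℂ F] (A : E →L[ℂ] F) (j : ℕ) :
    (A : E →ₗ[ℂ] F).singularValues j ≤ sv A j := by
  have : Nonempty {G : E →L[ℂ] F // (G : E →ₗ[ℂ] F).rank ≤ j} := ⟨⟨0, by simp⟩⟩
  exact le_ciInf fun G => A.singularValues_le_opNorm_sub G G.2

end ApproximationNumbers

theorem stmt16_general {X : Type u} [NormedAddCommGroup X] [InnerProductSpace ℂ X]
    (T : X →L[ℂ] X)
    (e : ℕ → X) (he : Orthonormal ℂ e) :
    ∀ n : ℕ, ∑ k ∈ Finset.range n, ‖(⟪e k, T (e k)⟫ : ℂ)‖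
      ≤ ∑ k ∈ Finset.range n, sv T k := by
  classical
  intro n
  let V := Submodule.span ℂ ((Finset.range n).image e : Set X)
  let b : OrthonormalBasis (Finset.range n) ℂ V := OrthonormalBasis.span he (Finset.range n)
  let A : V →L[ℂ] V := V.orthogonalProjectionOnto ∘L T ∘L V.subtypeL
  have hA : ∀ k, ⟪b k, A (b k)⟫ = ⟪e k, T (e k)⟫ := fun k => by
    rw [ContinuousLinearMap.comp_apply, ContinuousLinearMap.comp_apply,
      Submodule.inner_orthogonalProjectionOnto_eq_of_mem_left, Submodule.subtypeL_apply,
      OrthonormalBasis.span_apply]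
  have hV : finrank ℂ V = n := by simpa using finrank_eq_card_basis b.toBasis
  calc ∑ k ∈ Finset.range n, ‖⟪e k, T (e k)⟫‖ = ∑ k, ‖⟪b k, A (b k)⟫‖ := by
        simp_rw [hA]; exact (Finset.sum_coe_sort _ _).symm
    _ ≤ ∑ i ∈ Finset.range (finrank ℂ V), (A : V →ₗ[ℂ] V).singularValues i :=
        LinearMap.sum_norm_inner_le_sum_singularValues _ b
    _ ≤ ∑ i ∈ Finset.range n, sv T i := by
        rw [hV]
        gcongr with i
        calc (A : V →ₗ[ℂ] V).singularValues i ≤ sv A i := A.singularValues_le_sv i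
          _ ≤ ‖V.orthogonalProjectionOnto‖ * ‖V.subtypeL‖ * sv T i := sv_comp_le _ _ _ i
          _ ≤ 1 * 1 * sv T i := by
              gcongr
              · exact sv_nonneg T i
              · exact V.orthogonalProjectionOnto_norm_le
              · exact Submodule.norm_subtypeL_le V
          _ = sv T i := by ring

/-- For a compact operator `T` and any orthonormal system `(e_k)`,
`∑_{k=1}^n |⟨e_k, T e_k⟩| ≤ ∑_{k=1}^n s_k(T)` for every `n`. -/
theorem stmt16 {X : Type u} [NormedAddCommGroup X] [InnerProductSpace ℂ X] [CompleteSpace X]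
    (hX : ¬ FiniteDimensional ℂ X)
    (T : X →L[ℂ] X) (hT : IsCompactOperator T)
    (e : ℕ → X) (he : Orthonormal ℂ e) :
    ∀ n : ℕ, ∑ k ∈ Finset.range n, ‖(⟪e k, T (e k)⟫ : ℂ)‖
      ≤ ∑ k ∈ Finset.range n, sv T k :=
  stmt16_general T e he

end
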